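/- Let f ∈ RF with sign ε of the Walsh transform, m even, and β ∈ 𝔽_q^×. Let N_{f,β} = #{x ∈ 𝔽_q : f(x)=0 and Tr(βx)=0}. Then N_{f,β} = p^{m-2} + ε(-1/p)^{m/2}(p-1)p^{(m-2)/2} if f*(β)=0, and N_{f,β} = p^{m-2} if f*(β)≠0. -/

import Mathlib

/-!
Write `ζ = ζ_p`. Orthogonality of additive characters gives
`p² N_{f,β} = ∑_{y,z ∈ 𝔽_p} ∑_x ζ^{y f(x) + z Tr(βx)}`. As `m` is even, the Walsh
amplitude `r = ε √(p*)^m = ε (-1/p)^{m/2} p^{m/2}` is a rational integer, so the Galois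
automorphism `ζ ↦ ζ^y` maps `W_f(wβ) = r ζ^{f*(wβ)}` to
`∑_x ζ^{y (f(x) + Tr(wβx))} = r ζ^{y f*(wβ)}`. The row `y = 0` contributes `q`, the rows
`y ≠ 0` contribute `r p (#{w : f*(wβ) = 0} - 1)`.

The same Galois argument turns the homogeneity of `f` into `f*(c^{h-1} γ) = c^h f*(γ)`;
since `c ↦ c^{h-1}` is onto `𝔽_p^×`, `f*(wβ)` vanishes for all `w ≠ 0` or for none.
Finally `f*(0) = 0`: otherwise comparing coefficients in
`∑_c #f⁻¹(c) ζ^c = W_f(0) = r ζ^{f*(0)}` forces `p #f⁻¹(0) = q - r`, contradicting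
`#f⁻¹(0) ≡ 1 (mod p - 1)` (the nonzero zeros of `f` form free `𝔽_p^×`-orbits).
-/

open Complex

noncomputable def zp (p : ℕ) : ℂ := Complex.exp (2 * Real.pi * Complex.I / p)

noncomputable def sqrtPstar (p : ℕ) : ℂ :=
  if p % 4 = 1 then (Real.sqrt p : ℂ) else (Real.sqrt p : ℂ) * Complex.I

open Polynomial Finset ZMod

section Cyclotomic

variable {p : ℕ} [Fact p.Prime]

lemma zp_pow (n : ℕ) : zp p ^ n = stdAddChar (n : ZMod p) := by
  rw [stdAddChar_apply, toCircle_natCast, zp, ← Complex.exp_nat_mul]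
  congr 1
  ring

lemma zp_pow_val (a : ZMod p) : zp p ^ a.val = stdAddChar a := by
  rw [zp_pow, natCast_zmod_val]

lemma isPrimitiveRoot_zp : IsPrimitiveRoot (zp p) p :=
  Complex.isPrimitiveRoot_exp p (Fact.out : p.Prime).ne_zero

lemma cyclotomic_dvd_of_aeval_zp_eq_zero {P : ℤ[X]} (hP : aeval (zp p) P = 0) :
    cyclotomic p ℤ ∣ P := by
  have hp := (Fact.out : p.Prime).pos
  rw [cyclotomic_eq_minpoly isPrimitiveRoot_zp hp]
  exact minpoly.isIntegrallyClosed_dvd (isPrimitiveRoot_zp.isIntegral hp) hP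

-- The Galois conjugation `ζ_p ↦ ζ_p ^ u` of `ℚ(ζ_p)`, applied to an integral relation.
lemma sum_stdAddChar_mul_eq_of_eq {ι : Type*} {S : Finset ι} {v : ι → ZMod p} {r : ℤ}
    {c : ZMod p} (h : ∑ i ∈ S, stdAddChar (v i) = (r : ℂ) * stdAddChar c)
    {u : ZMod p} (hu : u ≠ 0) :
    ∑ i ∈ S, stdAddChar (u * v i) = (r : ℂ) * stdAddChar (u * c) := by
  set P : ℤ[X] := ∑ i ∈ S, X ^ (v i).val - C r * X ^ c.val
  have aeval_P : ∀ z : ℂ, aeval z P = ∑ i ∈ S, z ^ (v i).val - r * z ^ c.val := by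
    intro z; simp [P]
  have hu' : u.val.Coprime p :=
    (Nat.coprime_of_lt_prime ((val_ne_zero u).2 hu) u.val_lt Fact.out).symm
  obtain ⟨Q, hQ⟩ := cyclotomic_dvd_of_aeval_zp_eq_zero (p := p) (P := P)
    (by rw [aeval_P, sub_eq_zero]; simpa [zp_pow_val] using h)
  have hroot : aeval (zp p ^ u.val) P = 0 := by
    rw [hQ, map_mul, cyclotomic_eq_minpoly (isPrimitiveRoot_zp.pow_of_coprime _ hu')
      (Fact.out : p.Prime).pos, minpoly.aeval, zero_mul]
  have hconj : ∀ a : ZMod p, (zp p ^ u.val) ^ a.val = stdAddChar (u * a) := by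
    intro a; rw [← pow_mul, zp_pow]; simp
  rw [aeval_P, sub_eq_zero] at hroot
  simpa only [hconj] using hroot

-- The relation is a multiple of the cyclotomic polynomial `1 + X + ⋯ + X ^ (p - 1)`.
lemma eq_of_sum_mul_stdAddChar_eq_zero (M : ZMod p → ℤ)
    (h : ∑ c, (M c : ℂ) * stdAddChar c = 0) (c : ZMod p) : M c = M 0 := by
  have hp := (Fact.out : p.Prime)
  set B : ℤ[X] := ∑ c : ZMod p, C (M c) * X ^ c.val
  have coeff_B : ∀ a : ZMod p, B.coeff a.val = M a := by
    intro a
    simp [B, (val_injective p).eq_iff]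
  obtain ⟨Q, hQ⟩ := cyclotomic_dvd_of_aeval_zp_eq_zero (p := p) (P := B)
    (by simpa [B, zp_pow_val] using h)
  obtain ⟨q, rfl⟩ : ∃ q, Q = C q := by
    refine ⟨Q.coeff 0, eq_C_of_natDegree_eq_zero ?_⟩
    by_contra hQ0
    have hdeg : B.natDegree ≤ p - 1 :=
      natDegree_sum_le_of_forall_le _ _ fun c _ =>
        (natDegree_C_mul_X_pow_le _ _).trans (Nat.le_sub_one_of_lt c.val_lt)
    rw [hQ, (cyclotomic.monic p ℤ).natDegree_mul' (fun h => hQ0 (by simp [h])),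
      natDegree_cyclotomic, Nat.totient_prime hp] at hdeg
    omega
  have coeff_Φ : ∀ a : ZMod p, (cyclotomic p ℤ * C q).coeff a.val = q := by
    intro a
    simp [cyclotomic_prime, coeff_X_pow, a.val_lt]
  rw [← coeff_B, ← coeff_B, hQ, coeff_Φ, coeff_Φ]

end Cyclotomic

section CharacterSums

variable {p : ℕ} [Fact p.Prime]

lemma sum_stdAddChar_mul (t : ZMod p) :
    ∑ y : ZMod p, (stdAddChar (y * t) : ℂ) = if t = 0 then (p : ℂ) else 0 := by
  rw [AddChar.sum_mulShift t (isPrimitive_stdAddChar p), ZMod.card]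
  split_ifs <;> simp

lemma sum_stdAddChar_trace_mul {F : Type*} [Field F] [Fintype F] [DecidableEq F]
    [Algebra (ZMod p) F] (γ : F) :
    ∑ x : F, (stdAddChar (Algebra.trace (ZMod p) F (γ * x)) : ℂ) =
      if γ = 0 then (Fintype.card F : ℂ) else 0 := by
  have hprim : (stdAddChar.compAddMonoidHom
      (Algebra.trace (ZMod p) F).toAddMonoidHom : AddChar F ℂ).IsPrimitive := by
    refine AddChar.IsPrimitive.of_ne_one (AddChar.ne_one_iff.2 ?_)
    obtain ⟨a, ha⟩ := Algebra.trace_surjective (ZMod p) F 1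
    refine ⟨a, ?_⟩
    simpa [ha] using (injective_stdAddChar (N := p)).ne one_ne_zero
  simpa [mul_comm] using AddChar.sum_mulShift γ hprim

lemma sq_mul_card_filter_eq_sum {α : Type*} [Fintype α] (g₁ g₂ : α → ZMod p) :
    (p : ℂ) ^ 2 * #{x | g₁ x = 0 ∧ g₂ x = 0} =
      ∑ y : ZMod p, ∑ z : ZMod p, ∑ x, stdAddChar (y * g₁ x + z * g₂ x) := by
  have hx : ∀ x, ∑ y : ZMod p, ∑ z : ZMod p, (stdAddChar (y * g₁ x + z * g₂ x) : ℂ) =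
      if g₁ x = 0 ∧ g₂ x = 0 then (p : ℂ) ^ 2 else 0 := by
    intro x
    simp only [AddChar.map_add_eq_mul, ← mul_sum, ← sum_mul, sum_stdAddChar_mul]
    split_ifs <;> simp_all [sq]
  conv_rhs => enter [2, y]; rw [sum_comm]
  rw [sum_comm]
  simp [hx, sum_ite, mul_comm]

lemma mul_card_filter_eq_zero_add_eq_card {α : Type*} [Fintype α] {g : α → ZMod p} {r : ℤ}
    {d : ZMod p} (hg : ∑ x, (stdAddChar (g x) : ℂ) = r * stdAddChar d) (hd : d ≠ 0) :
    (p : ℤ) * #{x | g x = 0} + r = Fintype.card α := by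
  set N : ZMod p → ℤ := fun c => #{x | g x = c}
  have hfiber : ∑ c, (N c : ℂ) * stdAddChar c = r * stdAddChar d := by
    rw [← hg, ← sum_fiberwise univ g]
    refine sum_congr rfl fun c _ => ?_
    rw [sum_congr rfl fun x hx => by rw [(mem_filter.1 hx).2], sum_const, nsmul_eq_mul]
    simp [N]
  have hN : ∀ c, N c = N 0 + if c = d then r else 0 := by
    intro c
    have := eq_of_sum_mul_stdAddChar_eq_zero (fun c => N c - if c = d then r else 0)
      (by simp [sub_mul, sum_sub_distrib, hfiber, ite_mul]) c
    simp only [if_neg (Ne.symm hd)] at this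
    omega
  have hcard := card_eq_sum_card_fiberwise (s := univ) (t := univ) (f := g) fun _ _ => mem_univ _
  rw [card_univ] at hcard
  rw [hcard, Nat.cast_sum]
  change _ = ∑ c, N c
  rw [sum_congr rfl fun c _ => hN c, sum_add_distrib]
  simp [N, ZMod.card]

end CharacterSums

lemma card_units_dvd_card_of_units_smul_mem {R M : Type*} [Ring R] [IsDomain R]
    [AddCommGroup M] [Module R M] [Module.IsTorsionFree R M] (S : Finset M) (h0 : (0 : M) ∉ S)
    (hS : ∀ a : Rˣ, ∀ x ∈ S, a • x ∈ S) : Nat.card Rˣ ∣ S.card := by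
  let P : SubMulAction Rˣ M := { carrier := S, smul_mem' := hS }
  have hfree : ∀ b : P, MulAction.stabilizer Rˣ b = ⊥ := fun b => by
    rw [SubMulAction.stabilizer_of_subMul,
      Module.stabilizer_units_eq_bot_of_ne_zero R (ne_of_mem_of_not_mem b.2 h0)]
  have hcard := Nat.card_congr (MulAction.selfEquivOrbitsQuotientProd hfree)
  rw [Nat.card_prod] at hcard
  have : Nat.card P = S.card := (Nat.card_coe_set_eq (S : Set M)).trans (Set.ncard_coe_finset S)
  exact ⟨_, by rw [← this, hcard, mul_comm]⟩

lemma sub_one_dvd_card_filter_eq_zero_sub_one {p : ℕ} [Fact p.Prime] {V M : Type*}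
    [AddCommGroup V] [Module (ZMod p) V] [Fintype V] [DecidableEq V] [Zero M] [DecidableEq M]
    {g : V → M} (hg0 : g 0 = 0)
    (hzero : ∀ (a : (ZMod p)ˣ) (x : V), g x = 0 → g (a • x) = 0) :
    (p - 1 : ℤ) ∣ #{x | g x = 0} - 1 := by
  have hsplit := card_erase_add_one (s := {x | g x = 0}) (a := 0) (by simpa using hg0)
  obtain ⟨t, ht⟩ := card_units_dvd_card_of_units_smul_mem (R := ZMod p)
    (({x | g x = 0} : Finset V).erase 0) (by simp) fun a x hx => by
      simp only [mem_erase, mem_filter, mem_univ, true_and] at hx ⊢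
      exact ⟨(smul_ne_zero_iff_ne a).2 hx.1, hzero a x hx.2⟩
  rw [Nat.card_eq_fintype_card, ZMod.card_units] at ht
  refine ⟨t, ?_⟩
  rw [← hsplit, ht]
  push_cast [(Fact.out : p.Prime).one_le]
  ring

lemma card_filter_eq_zero_of_forall_ne_zero_iff {p : ℕ} [NeZero p] {M : Type*} [Zero M]
    [DecidableEq M] (g : ZMod p → M) (hg0 : g 0 = 0)
    (hg : ∀ w : ZMod p, w ≠ 0 → (g w = 0 ↔ g 1 = 0)) :
    #{w | g w = 0} = if g 1 = 0 then p else 1 := by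
  split_ifs with h1
  · rw [filter_true_of_mem, card_univ, ZMod.card]
    intro w _
    rcases eq_or_ne w 0 with rfl | hw
    exacts [hg0, (hg w hw).2 h1]
  · refine card_eq_one.2 ⟨0, eq_singleton_iff_unique_mem.2 ⟨by simpa using hg0, fun w hw => ?_⟩⟩
    by_contra hw0
    exact h1 ((hg w hw0).1 (mem_filter.1 hw).2)

lemma trace_algebraMap_mul {R S : Type*} [CommRing R] [CommRing S] [Algebra R S] (a : R)
    (x : S) :
    Algebra.trace R S (algebraMap R S a * x) = a * Algebra.trace R S x := by
  rw [← Algebra.smul_def, _root_.map_smul, smul_eq_mul]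

lemma sqrtPstar_sq {p : ℕ} [Fact p.Prime] (hp2 : p ≠ 2) :
    sqrtPstar p ^ 2 = ((legendreSym p (-1) * p : ℤ) : ℂ) := by
  have hsq : (Real.sqrt p : ℂ) ^ 2 = p := by
    rw [← Complex.ofReal_pow, Real.sq_sqrt (Nat.cast_nonneg p), Complex.ofReal_natCast]
  have hodd := (Nat.Prime.mod_two_eq_one_iff_ne_two Fact.out).2 hp2
  rw [legendreSym.at_neg_one hp2]
  rcases (show p % 4 = 1 ∨ p % 4 = 3 by omega) with h4 | h4
  · rw [sqrtPstar, if_pos h4, hsq, ZMod.χ₄_nat_one_mod_four h4]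
    push_cast; ring
  · rw [sqrtPstar, if_neg (by omega), mul_pow, hsq, Complex.I_sq, ZMod.χ₄_nat_three_mod_four h4]
    push_cast; ring

section Walsh

variable {p : ℕ} [Fact p.Prime] {F : Type*} [Field F] [Fintype F] [Algebra (ZMod p) F]

/-- The paper's `W_f(γ) = r ζ_p ^ {f*(γ)}`, with `stdAddChar a` standing for `ζ_p ^ a` and an
integral amplitude `r`. -/
def HasWalshDual (r : ℤ) (f fstar : F → ZMod p) : Prop :=
  ∀ γ : F, ∑ x : F, (stdAddChar (f x + Algebra.trace (ZMod p) F (γ * x)) : ℂ) =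
    r * stdAddChar (fstar γ)

variable {r : ℤ} {f fstar : F → ZMod p}

lemma HasWalshDual.fstar_algebraMap_pow_mul (hW : HasWalshDual r f fstar) (hr : r ≠ 0)
    {h : ℕ} (hh : h ≠ 0)
    (hhom : ∀ (a : (ZMod p)ˣ) (x : F), f (algebraMap (ZMod p) F a * x) = (a : ZMod p) ^ h * f x)
    (c : (ZMod p)ˣ) (γ : F) :
    fstar (algebraMap (ZMod p) F ((c : ZMod p) ^ (h - 1)) * γ) = (c : ZMod p) ^ h * fstar γ := by
  set c' := algebraMap (ZMod p) F c
  have hc' : c' ≠ 0 := by simp [c']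
  have hscale : ∀ x : F, (c : ZMod p) ^ h * (f x + Algebra.trace (ZMod p) F (γ * x)) =
      f (c' * x) +
        Algebra.trace (ZMod p) F (algebraMap (ZMod p) F (c ^ (h - 1)) * γ * (c' * x)) := by
    intro x
    have : algebraMap (ZMod p) F (c ^ (h - 1)) * γ * (c' * x) =
        algebraMap (ZMod p) F (c ^ h) * (γ * x) := by
      rw [map_pow, map_pow, ← pow_sub_one_mul hh]; ring
    rw [hhom, this, trace_algebraMap_mul]; ring
  have hconj := sum_stdAddChar_mul_eq_of_eq (hW γ) (pow_ne_zero h c.ne_zero)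
  simp_rw [hscale] at hconj
  rw [Fintype.sum_bijective _ (mulLeft_bijective₀ c' hc') _
    (fun x => stdAddChar (f x + Algebra.trace (ZMod p) F
      (algebraMap (ZMod p) F (c ^ (h - 1)) * γ * x))) (fun _ => rfl), hW] at hconj
  exact injective_stdAddChar (mul_left_cancel₀ (Int.cast_ne_zero.2 hr) hconj)

lemma HasWalshDual.fstar_algebraMap_mul_eq_zero_iff (hW : HasWalshDual r f fstar) (hr : r ≠ 0)
    {h : ℕ} (hh0 : h ≠ 0) (hh : Nat.gcd (h - 1) (p - 1) = 1)
    (hhom : ∀ (a : (ZMod p)ˣ) (x : F), f (algebraMap (ZMod p) F a * x) = (a : ZMod p) ^ h * f x)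
    {w : ZMod p} (hw : w ≠ 0) (γ : F) :
    fstar (algebraMap (ZMod p) F w * γ) = 0 ↔ fstar γ = 0 := by
  have hcop : (Nat.card (ZMod p)ˣ).Coprime (h - 1) := by
    rw [Nat.card_eq_fintype_card, ZMod.card_units]
    exact Nat.coprime_comm.mp hh
  obtain ⟨c, hc⟩ : ∃ c : (ZMod p)ˣ, c ^ (h - 1) = Units.mk0 w hw :=
    ⟨(powCoprime hcop).symm _, (powCoprime hcop).apply_symm_apply _⟩
  have hw' : w = (c : ZMod p) ^ (h - 1) := by rw [← Units.val_pow_eq_pow_val, hc, Units.val_mk0]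
  rw [hw', hW.fstar_algebraMap_pow_mul hr hh0 hhom, mul_eq_zero, or_iff_right]
  exact pow_ne_zero _ c.ne_zero

lemma HasWalshDual.fstar_zero_eq_zero [DecidableEq F] (hW : HasWalshDual r f fstar) (hp2 : p ≠ 2)
    (hf0 : f 0 = 0) (hzero : ∀ (a : (ZMod p)ˣ) (x : F), f x = 0 → f (a • x) = 0)
    {s : ℤ} (hs : IsUnit s) {k n : ℕ} (hr : r = s * p ^ k) (hcard : Fintype.card F = p ^ n) :
    fstar 0 = 0 := by
  by_contra hd
  set N : ℤ := ((#{x | f x = 0} : ℕ) : ℤ)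
  have hcardN : (p : ℤ) * N + r = p ^ n := by
    rw [mul_card_filter_eq_zero_add_eq_card (by simpa using hW 0) hd, hcard]
    push_cast; rfl
  have hdvd : (p - 1 : ℤ) ∣ s := by
    have h1 := sub_dvd_pow_sub_pow (p : ℤ) 1 n
    have h2 := sub_dvd_pow_sub_pow (p : ℤ) 1 k
    rw [one_pow] at h1 h2
    have key : s = (p ^ n - 1) - (p ^ k - 1) * s - (p - 1) * N - (N - 1) := by
      linear_combination hcardN - hr
    rw [key]
    exact ((h1.sub (h2.mul_right s)).sub (dvd_mul_right _ _)).sub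
      (sub_one_dvd_card_filter_eq_zero_sub_one hf0 hzero)
  have := (Fact.out : p.Prime).two_le
  rcases Int.isUnit_iff.1 (isUnit_of_dvd_unit hdvd hs) with h | h <;> omega

lemma HasWalshDual.sq_mul_card_filter [DecidableEq F] (hW : HasWalshDual r f fstar) {β : F}
    (hβ : β ≠ 0) :
    (p : ℤ) ^ 2 * #{x | f x = 0 ∧ Algebra.trace (ZMod p) F (β * x) = 0} =
      Fintype.card F + r * p * (#{w : ZMod p | fstar (algebraMap (ZMod p) F w * β) = 0} - 1) := by
  set t : ZMod p → ZMod p := fun w => fstar (algebraMap (ZMod p) F w * β)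
  set R : ZMod p → ℂ := fun y => ∑ z : ZMod p, ∑ x : F,
    stdAddChar (y * f x + z * Algebra.trace (ZMod p) F (β * x))
  have htrace : ∀ (w : ZMod p) (x : F), w * Algebra.trace (ZMod p) F (β * x) =
      Algebra.trace (ZMod p) F (algebraMap (ZMod p) F w * β * x) := by
    intro w x; rw [mul_assoc, trace_algebraMap_mul]
  have hR0 : R 0 = Fintype.card F := by
    simp only [R, zero_mul, zero_add, htrace, sum_stdAddChar_trace_mul, mul_eq_zero,
      map_eq_zero, hβ, or_false, sum_ite_eq', mem_univ, if_true]
  have hR : ∀ y : ZMod p, y ≠ 0 → R y = r * ∑ w, stdAddChar (y * t w) := by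
    intro y hy
    rw [mul_sum]
    refine (Fintype.sum_bijective _ (mulLeft_bijective₀ y hy) _ _ fun w => ?_).symm
    rw [← sum_stdAddChar_mul_eq_of_eq (hW _) hy]
    simp only [mul_add, mul_assoc, trace_algebraMap_mul]
  have hsum : ∑ y : ZMod p, (r : ℂ) * ∑ w, stdAddChar (y * t w) =
      r * p * #{w | t w = 0} := by
    rw [← mul_sum, sum_comm]
    simp only [sum_stdAddChar_mul, ← sum_filter, sum_const, nsmul_eq_mul]
    ring
  have hcount : (p : ℂ) ^ 2 * #{x | f x = 0 ∧ Algebra.trace (ZMod p) F (β * x) = 0} =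
      Fintype.card F + r * p * (#{w | t w = 0} - 1) := by
    rw [sq_mul_card_filter_eq_sum, ← add_sum_erase _ _ (mem_univ 0)]
    change R 0 + ∑ y ∈ univ.erase 0, R y = _
    rw [hR0, sum_congr rfl fun y hy => hR y (ne_of_mem_erase hy), sum_erase_eq_sub (mem_univ 0),
      hsum]
    simp [ZMod.card]
    ring
  exact_mod_cast hcount

end Walsh

lemma hasWalshDual_of_sum_zp_pow_eq {p : ℕ} [Fact p.Prime] (hp2 : p ≠ 2) {F : Type*} [Field F]
    [Fintype F] [Algebra (ZMod p) F] {f fstar : F → ZMod p} {ε : ℤ} {k : ℕ}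
    (hW : ∀ β : F, ∑ x : F, zp p ^ (f x + Algebra.trace (ZMod p) F (β * x)).val
      = (ε : ℂ) * sqrtPstar p ^ (2 * k) * zp p ^ (fstar β).val) :
    HasWalshDual (ε * legendreSym p (-1) ^ k * p ^ k) f fstar := fun γ => by
  have := hW γ
  simp only [zp_pow_val, pow_mul, sqrtPstar_sq hp2] at this
  rw [this]
  push_cast
  ring

theorem stmt_13 (p m : ℕ) [Fact p.Prime] (hp2 : p ≠ 2) (hme : Even m) (hm : 2 ≤ m)
    (F : Type) [Field F] [Fintype F] [DecidableEq F] [Algebra (ZMod p) F]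
    (hcard : Fintype.card F = p ^ m)
    (f fstar : F → ZMod p) (ε : ℤ) (hε : ε = 1 ∨ ε = -1)
    (hW : ∀ β : F, ∑ x : F, zp p ^ (f x + Algebra.trace (ZMod p) F (β * x)).val
      = (ε : ℂ) * sqrtPstar p ^ m * zp p ^ (fstar β).val)
    (hf0 : f 0 = 0) (h : ℕ) (hh : Nat.gcd (h - 1) (p - 1) = 1)
    (hhom : ∀ (a : (ZMod p)ˣ) (x : F),
      f (algebraMap (ZMod p) F (a : ZMod p) * x) = (a : ZMod p) ^ h * f x)
    (β : F) (hβ : β ≠ 0) :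
    (fstar β = 0 →
      (((Finset.univ.filter fun x : F => f x = 0 ∧ Algebra.trace (ZMod p) F (β * x) = 0).card : ℤ)
        = (p : ℤ) ^ (m - 2) + ε * (legendreSym p (-1)) ^ (m / 2) * (p - 1) * (p : ℤ) ^ ((m - 2) / 2)))
    ∧ (fstar β ≠ 0 →
      (((Finset.univ.filter fun x : F => f x = 0 ∧ Algebra.trace (ZMod p) F (β * x) = 0).card : ℤ)
        = (p : ℤ) ^ (m - 2))) := by
  have hp := (Fact.out : p.Prime)
  obtain ⟨k, rfl⟩ : ∃ k, m = 2 * (k + 1) := by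
    obtain ⟨j, rfl⟩ := hme
    exact ⟨j - 1, by omega⟩
  have hW' := hasWalshDual_of_sum_zp_pow_eq hp2 hW
  have hL := Int.isUnit_iff.2 (legendreSym.eq_one_or_neg_one p (a := -1) (by simp))
  have hs : IsUnit (ε * legendreSym p (-1) ^ (k + 1)) := (Int.isUnit_iff.2 hε).mul (hL.pow _)
  have hr := mul_ne_zero hs.ne_zero (pow_ne_zero (k + 1) (Int.natCast_ne_zero.2 hp.ne_zero))
  have hh0 : h ≠ 0 := by
    rintro rfl
    simp only [zero_tsub, Nat.gcd_zero_left] at hh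
    omega
  have hfs0 := hW'.fstar_zero_eq_zero hp2 hf0
    (fun a x hx => by rw [Units.smul_def, Algebra.smul_def, hhom, hx, mul_zero]) hs rfl hcard
  have hline := card_filter_eq_zero_of_forall_ne_zero_iff
    (fun w => fstar (algebraMap (ZMod p) F w * β)) (by simpa using hfs0)
    (fun w hw => by simpa using hW'.fstar_algebraMap_mul_eq_zero_iff hr hh0 hh hhom hw β)
  have hcount := hW'.sq_mul_card_filter hβ
  simp only [map_one, one_mul] at hline
  rw [hline, hcard] at hcount
  have hpsq : (p : ℤ) ^ 2 ≠ 0 := pow_ne_zero 2 (Int.natCast_ne_zero.2 hp.ne_zero)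
  refine ⟨fun hb => mul_left_cancel₀ hpsq ?_, fun hb => mul_left_cancel₀ hpsq ?_⟩ <;>
    simp only [hb, if_true, if_false] at hcount <;> rw [hcount] <;>
    simp [show 2 * (k + 1) - 2 = 2 * k by omega] <;> ring
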